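/- For every bounded measurable function f on the unit circle, the Riesz projection P⁺f (the function whose Fourier coefficients agree with those of f for nonnegative indices and vanish for negative indices) satisfies ‖P⁺f‖₄⁴ ≤ ‖f‖∞² · ‖f‖₂², where norms are with respect to normalized Lebesgue measure on the circle. -/

import Mathlib

/-!
Write `f = g + k` with `g = P⁺f` and `k = P⁻f`. Then `f (g - k) = g² - k²`, where `g²` has
Fourier spectrum in `ℕ` and `k²` in the negative integers, so `g²` is the Riesz projection of
`f (g - k)`. As `P⁺` is a contraction on `L²`,
`‖g‖₄² = ‖g²‖₂ ≤ ‖f (g - k)‖₂ ≤ ‖f‖_∞ ‖g - k‖₂ = ‖f‖_∞ ‖f‖₂`,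
the last equality because `g - k` and `f` have Fourier coefficients of equal modulus.
A priori `g²` is only integrable; it lies in `L²` because an integrable function on the circle
is determined by its Fourier coefficients.
-/

open MeasureTheory Real Filter
open scoped ENNReal Topology

/-- Normalized Haar (Lebesgue) measure on the circle `𝕋 = ℝ/ℤ`. -/
noncomputable def muT : Measure (AddCircle (1:ℝ)) := AddCircle.haarAddCircle

/-- `g` is the Riesz projection `P⁺f` of `f`: the Fourier coefficients of `g` agree with
those of `f` for nonnegative indices and vanish for negative indices. -/
def IsRiesz (f g : AddCircle (1:ℝ) → ℂ) : Prop :=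
  MemLp f 2 muT ∧ MemLp g 2 muT ∧
    (∀ n : ℤ, 0 ≤ n → fourierCoeff g n = fourierCoeff f n) ∧
    (∀ n : ℤ, n < 0 → fourierCoeff g n = 0)

open AddCircle
open scoped NNReal ComplexConjugate BoundedContinuousFunction

theorem eLpNorm_mul_self {α 𝕜 : Type*} [MeasurableSpace α] [NormedRing 𝕜] [NormMulClass 𝕜]
    (g : α → 𝕜) (p : ℝ≥0∞) (μ : Measure α) :
    eLpNorm (g * g) p μ = eLpNorm g (p * 2) μ ^ 2 := by
  have hg : eLpNorm (g * g) p μ = eLpNorm (fun x => ‖g x‖ ^ (2 : ℝ)) p μ :=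
    eLpNorm_congr_norm_ae (ae_of_all _ fun x => by simp [norm_mul, sq])
  rw [hg, eLpNorm_norm_rpow g two_pos, ENNReal.ofReal_ofNat, ENNReal.rpow_two]

theorem ae_eq_zero_of_forall_integral_smul_eq_zero {X E : Type*} [TopologicalSpace X]
    [HasOuterApproxClosed X] [MeasurableSpace X] [BorelSpace X] [NormedAddCommGroup E]
    [NormedSpace ℝ E] [CompleteSpace E] {μ : Measure X} {u : X → E} (hu : Integrable u μ)
    (h : ∀ φ : X →ᵇ ℝ≥0, ∫ x, (φ x : ℝ) • u x ∂μ = 0) : u =ᵐ[μ] 0 := by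
  refine ae_eq_zero_of_forall_setIntegral_isClosed_eq_zero hu fun s hs => ?_
  have hlim : Tendsto (fun n => ∫ x, (hs.apprSeq n x : ℝ) • u x ∂μ) atTop
      (𝓝 (∫ x in s, u x ∂μ)) := by
    rw [← integral_indicator hs.measurableSet]
    refine tendsto_integral_of_dominated_convergence (‖u ·‖)
      (fun n => (hs.apprSeq n).continuous.measurable.coe_nnreal_real.aestronglyMeasurable.smul hu.1)
      hu.norm (fun n => ae_of_all _ fun x => ?_) (ae_of_all _ fun x => ?_)
    · rw [norm_smul, NNReal.norm_eq]
      exact mul_le_of_le_one_left (norm_nonneg _)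
        (by exact_mod_cast HasOuterApproxClosed.apprSeq_apply_le_one hs n x)
    · have hx := ((NNReal.continuous_coe.tendsto _).comp
        (tendsto_pi_nhds.1 (HasOuterApproxClosed.tendsto_apprSeq hs) x)).smul_const (u x)
      by_cases hxs : x ∈ s <;> simpa [hxs] using hx
  simp only [h] at hlim
  exact (tendsto_nhds_unique tendsto_const_nhds hlim).symm

section FourierCoeff

variable {T : ℝ} [Fact (0 < T)]
  {E : Type*} [NormedAddCommGroup E] [NormedSpace ℂ E]

theorem fourierCoeff_sub {u v : AddCircle T → E} (hu : Integrable u haarAddCircle)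
    (hv : Integrable v haarAddCircle) :
    fourierCoeff (u - v) = fourierCoeff u - fourierCoeff v := by
  ext n
  simpa [fourierCoeff, smul_sub, -fourier_apply] using
    integral_sub (hu.fourier_smul (-n)) (hv.fourier_smul (-n))

theorem fourierCoeff_fourier_smul (u : AddCircle T → E) (m n : ℤ) :
    fourierCoeff (fun t => fourier m t • u t) n = fourierCoeff u (n - m) := by
  unfold fourierCoeff
  congr 1 with t
  rw [smul_smul, ← fourier_add, neg_sub, sub_eq_neg_add]

theorem MeasureTheory.MemLp.fourier_smul {u : AddCircle T → E} {p : ℝ≥0∞}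
    (hu : MemLp u p AddCircle.haarAddCircle) (m : ℤ) :
    MemLp (fun t => fourier m t • u t) p AddCircle.haarAddCircle :=
  hu.congr_norm ((map_continuous _).aestronglyMeasurable.smul hu.1)
    (ae_of_all _ fun t => by rw [norm_smul, fourier_apply, Circle.norm_coe, one_mul])

theorem fourierCoeff_star (u : AddCircle T → ℂ) (n : ℤ) :
    fourierCoeff (star u) n = conj (fourierCoeff u (-n)) := by
  simp only [fourierCoeff, neg_neg, smul_eq_mul, ← integral_conj, map_mul, fourier_neg,
    Pi.star_apply, Complex.star_def]

theorem integral_smul_eq_zero_of_fourierCoeff_eq_zero {u : AddCircle T → E}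
    (hu : Integrable u haarAddCircle) (h : ∀ n, fourierCoeff u n = 0) (φ : C(AddCircle T, ℂ)) :
    ∫ t, φ t • u t ∂haarAddCircle = 0 := by
  have hint : ∀ ψ : C(AddCircle T, ℂ), Integrable (fun t => ψ t • u t) haarAddCircle :=
    fun ψ => hu.bdd_smul ‖ψ‖ (map_continuous ψ).aestronglyMeasurable
      (ae_of_all _ ψ.norm_coe_le_norm)
  let Λ : C(AddCircle T, ℂ) →L[ℂ] E := LinearMap.mkContinuous
    { toFun := fun ψ => ∫ t, ψ t • u t ∂haarAddCircle
      map_add' := fun ψ χ => by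
        simp only [ContinuousMap.add_apply, add_smul]
        exact integral_add (hint ψ) (hint χ)
      map_smul' := fun c ψ => by
        simp only [ContinuousMap.smul_apply, smul_eq_mul, mul_smul, RingHom.id_apply]
        exact integral_smul c _ }
    (∫ t, ‖u t‖ ∂haarAddCircle) fun ψ => by
      rw [mul_comm, ← integral_const_mul]
      refine norm_integral_le_of_norm_le (hu.norm.const_mul _) (ae_of_all _ fun t => ?_)
      rw [norm_smul]
      exact mul_le_mul_of_nonneg_right (ψ.norm_coe_le_norm t) (norm_nonneg _)
  have hΛ : Λ = 0 := by
    refine ContinuousLinearMap.ext_on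
      (Submodule.dense_iff_topologicalClosure_eq_top.2 span_fourier_closure_eq_top) ?_
    rintro _ ⟨n, rfl⟩
    simpa [Λ, fourierCoeff, -fourier_apply] using h (-n)
  simpa [Λ] using congr($hΛ φ)

theorem ae_eq_zero_of_fourierCoeff_eq_zero [CompleteSpace E] {u : AddCircle T → E}
    (hu : Integrable u haarAddCircle) (h : ∀ n, fourierCoeff u n = 0) :
    u =ᵐ[haarAddCircle] 0 :=
  ae_eq_zero_of_forall_integral_smul_eq_zero hu fun φ => by
    have := integral_smul_eq_zero_of_fourierCoeff_eq_zero hu h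
      ⟨fun t => ((φ t : ℝ) : ℂ), by fun_prop⟩
    simp only [ContinuousMap.coe_mk, Complex.coe_smul] at this
    exact this

end FourierCoeff

section L2

variable {T : ℝ} [hT : Fact (0 < T)]

theorem hasSum_prod_fourierCoeff (f g : Lp ℂ 2 (@haarAddCircle T hT)) :
    HasSum (fun i => conj (fourierCoeff f i) * fourierCoeff g i)
      (∫ t, conj (f t) * g t ∂haarAddCircle) := by
  simp_rw [mul_comm (conj _)]
  refine HasSum.congr_fun (fourierBasis.hasSum_inner_mul_inner f g) (fun n ↦ ?_)
  simp only [← fourierBasis_repr, HilbertBasis.repr_apply_apply, inner_conj_symm,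
    mul_comm (inner ℂ f _)]

theorem MeasureTheory.MemLp.hasSum_prod_fourierCoeff {u v : AddCircle T → ℂ}
    (hu : MemLp u 2 AddCircle.haarAddCircle) (hv : MemLp v 2 AddCircle.haarAddCircle) :
    HasSum (fun i => conj (fourierCoeff u i) * fourierCoeff v i)
      (∫ t, conj (u t) * v t ∂AddCircle.haarAddCircle) := by
  convert _root_.hasSum_prod_fourierCoeff hu.toLp hv.toLp using 1
  · simp only [fourierCoeff_congr_ae hu.coeFn_toLp, fourierCoeff_congr_ae hv.coeFn_toLp]
  · refine integral_congr_ae ?_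
    filter_upwards [hu.coeFn_toLp, hv.coeFn_toLp] with t hut hvt
    rw [hut, hvt]

theorem hasSum_fourierCoeff_mul {u v : AddCircle T → ℂ}
    (hu : MemLp u 2 haarAddCircle) (hv : MemLp v 2 haarAddCircle) (n : ℤ) :
    HasSum (fun k => fourierCoeff u k * fourierCoeff v (n - k)) (fourierCoeff (u * v) n) := by
  -- `(u v)^(n)` is the `L²` inner product of `ū` and `e₋ₙ v`; expand it by Parseval.
  rw [← (Equiv.neg ℤ).hasSum_iff]
  convert hu.star.hasSum_prod_fourierCoeff (hv.fourier_smul (-n)) using 1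
  · ext k
    simp only [Function.comp_apply, Equiv.neg_apply, fourierCoeff_star, Complex.conj_conj,
      fourierCoeff_fourier_smul, sub_neg_eq_add, add_comm]
  · unfold fourierCoeff
    congr 1 with t
    simp only [Pi.mul_apply, Pi.star_apply, Complex.star_def, Complex.conj_conj, smul_eq_mul]
    ring

theorem fourierCoeff_mul_eq_zero {u v : AddCircle T → ℂ}
    (hu : MemLp u 2 haarAddCircle) (hv : MemLp v 2 haarAddCircle) {n : ℤ}
    (h : ∀ k, fourierCoeff u k = 0 ∨ fourierCoeff v (n - k) = 0) :
    fourierCoeff (u * v) n = 0 := by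
  have hterm : (fun k => fourierCoeff u k * fourierCoeff v (n - k)) = 0 :=
    funext fun k => mul_eq_zero.2 (h k)
  exact (hasSum_fourierCoeff_mul hu hv n).unique (hterm ▸ hasSum_zero)

theorem fourierCoeff_mul_eq_zero_of_neg {u v : AddCircle T → ℂ}
    (hu : MemLp u 2 haarAddCircle) (hv : MemLp v 2 haarAddCircle)
    (hu0 : ∀ k < 0, fourierCoeff u k = 0) (hv0 : ∀ k < 0, fourierCoeff v k = 0) {n : ℤ}
    (hn : n < 0) : fourierCoeff (u * v) n = 0 :=
  fourierCoeff_mul_eq_zero hu hv fun k => (lt_or_ge k 0).imp (hu0 k) fun _ => hv0 _ (by omega)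

theorem fourierCoeff_mul_eq_zero_of_nonneg {u v : AddCircle T → ℂ}
    (hu : MemLp u 2 haarAddCircle) (hv : MemLp v 2 haarAddCircle)
    (hu0 : ∀ k, 0 ≤ k → fourierCoeff u k = 0) (hv0 : ∀ k, 0 ≤ k → fourierCoeff v k = 0)
    {n : ℤ} (hn : 0 ≤ n) : fourierCoeff (u * v) n = 0 :=
  fourierCoeff_mul_eq_zero hu hv fun k => (le_or_gt 0 k).imp (hu0 k) fun _ => hv0 _ (by omega)

theorem norm_fourierCoeff_mul_self_le_sub {g k : AddCircle T → ℂ}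
    (hg : MemLp g 2 haarAddCircle) (hk : MemLp k 2 haarAddCircle)
    (hg0 : ∀ n < 0, fourierCoeff g n = 0) (hk0 : ∀ n, 0 ≤ n → fourierCoeff k n = 0) (n : ℤ) :
    ‖fourierCoeff (g * g) n‖ ≤ ‖fourierCoeff (g * g - k * k) n‖ := by
  rw [fourierCoeff_sub (hg.integrable_mul hg) (hk.integrable_mul hk), Pi.sub_apply]
  rcases le_or_gt 0 n with hn | hn
  · rw [fourierCoeff_mul_eq_zero_of_nonneg hk hk hk0 hk0 hn, sub_zero]
  · rw [fourierCoeff_mul_eq_zero_of_neg hg hg hg0 hg0 hn, norm_zero]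
    exact norm_nonneg _

theorem MeasureTheory.MemLp.hasSum_sq_fourierCoeff {w : AddCircle T → ℂ}
    (hw : MemLp w 2 AddCircle.haarAddCircle) :
    HasSum (fun n => ‖fourierCoeff w n‖ ^ 2)
      ((eLpNorm w 2 AddCircle.haarAddCircle).toReal ^ 2) := by
  have := lp.hasSum_norm (p := 2) (by norm_num) (fourierBasis.repr hw.toLp)
  simp only [LinearIsometryEquiv.norm_map, Lp.norm_toLp, fourierBasis_repr,
    fourierCoeff_congr_ae hw.coeFn_toLp] at this
  exact_mod_cast this

theorem MeasureTheory.MemLp.eLpNorm_two_sq_eq_tsum_fourierCoeff {w : AddCircle T → ℂ}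
    (hw : MemLp w 2 AddCircle.haarAddCircle) :
    eLpNorm w 2 AddCircle.haarAddCircle ^ 2 = ∑' n, ‖fourierCoeff w n‖ₑ ^ 2 := by
  rw [← ENNReal.ofReal_toReal (ENNReal.pow_ne_top hw.2.ne), ENNReal.toReal_pow,
    ← hw.hasSum_sq_fourierCoeff.tsum_eq,
    ENNReal.ofReal_tsum_of_nonneg (fun _ => by positivity) hw.hasSum_sq_fourierCoeff.summable]
  simp [ENNReal.ofReal_pow, ofReal_norm]

theorem memLp_two_of_summable_sq_fourierCoeff {u : AddCircle T → ℂ}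
    (hu : Integrable u haarAddCircle) (h : Summable fun n => ‖fourierCoeff u n‖ ^ 2) :
    MemLp u 2 haarAddCircle := by
  let W : Lp ℂ 2 (@haarAddCircle T hT) :=
    fourierBasis.repr.symm ⟨fourierCoeff u, memℓp_gen (by simpa using h)⟩
  have hW : fourierCoeff W = fourierCoeff u := by
    ext n
    rw [← fourierBasis_repr, LinearIsometryEquiv.apply_symm_apply]
  have hWint : Integrable W haarAddCircle := (Lp.memLp W).integrable one_le_two
  have huW : u =ᵐ[haarAddCircle] W := by
    filter_upwards [ae_eq_zero_of_fourierCoeff_eq_zero (hu.sub hWint)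
      (by simp [fourierCoeff_sub hu hWint, hW])] with t ht
    exact sub_eq_zero.1 ht
  exact (Lp.memLp W).ae_eq huW.symm

theorem eLpNorm_le_of_norm_fourierCoeff_le {u w : AddCircle T → ℂ}
    (hu : Integrable u haarAddCircle) (hw : MemLp w 2 haarAddCircle)
    (h : ∀ n, ‖fourierCoeff u n‖ ≤ ‖fourierCoeff w n‖) :
    eLpNorm u 2 haarAddCircle ≤ eLpNorm w 2 haarAddCircle := by
  have hu2 : MemLp u 2 haarAddCircle := memLp_two_of_summable_sq_fourierCoeff hu <|
    hw.hasSum_sq_fourierCoeff.summable.of_nonneg_of_le (fun _ => by positivity)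
      fun n => by gcongr; exact h n
  rw [← ENNReal.pow_le_pow_left_iff two_ne_zero, hu2.eLpNorm_two_sq_eq_tsum_fourierCoeff,
    hw.eLpNorm_two_sq_eq_tsum_fourierCoeff]
  exact ENNReal.tsum_le_tsum fun n => by gcongr; exact enorm_le_iff_norm_le.2 (h n)

theorem eLpNorm_eq_of_norm_fourierCoeff_eq {u w : AddCircle T → ℂ}
    (hu : MemLp u 2 haarAddCircle) (hw : MemLp w 2 haarAddCircle)
    (h : ∀ n, ‖fourierCoeff u n‖ = ‖fourierCoeff w n‖) :
    eLpNorm u 2 haarAddCircle = eLpNorm w 2 haarAddCircle :=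
  (eLpNorm_le_of_norm_fourierCoeff_le (hu.integrable one_le_two) hw fun n => (h n).le).antisymm
    (eLpNorm_le_of_norm_fourierCoeff_le (hw.integrable one_le_two) hu fun n => (h n).ge)

end L2

/-- `‖P⁺f‖₄⁴ ≤ ‖f‖_∞² * ‖f‖₂²` for every bounded measurable `f` on the circle. -/
theorem riesz_L4_bound (f g : AddCircle (1:ℝ) → ℂ) (hf : MemLp f ∞ muT)
    (h : IsRiesz f g) :
    eLpNorm g 4 muT ^ 4 ≤ eLpNorm f ∞ muT ^ 2 * eLpNorm f 2 muT ^ 2 := by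
  obtain ⟨hf2, hg2, hpos, hneg⟩ := h
  unfold muT at *
  set k := f - g
  have hk2 : MemLp k 2 haarAddCircle := hf2.sub hg2
  have hv2 : MemLp (g - k) 2 haarAddCircle := hg2.sub hk2
  have hk : fourierCoeff k = fourierCoeff f - fourierCoeff g :=
    fourierCoeff_sub (hf2.integrable one_le_two) (hg2.integrable one_le_two)
  have hk_nonneg : ∀ n, 0 ≤ n → fourierCoeff k n = 0 := fun n hn => by
    rw [hk, Pi.sub_apply, hpos n hn, sub_self]
  have hv : ∀ n, ‖fourierCoeff (g - k) n‖ = ‖fourierCoeff f n‖ := fun n => by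
    rw [fourierCoeff_sub (hg2.integrable one_le_two) (hk2.integrable one_le_two), hk]
    rcases le_or_gt 0 n with hn | hn
    · simp [hpos n hn]
    · simp [hneg n hn]
  have hfv : f * (g - k) = g * g - k * k := by simp only [k]; ring
  calc eLpNorm g 4 haarAddCircle ^ 4 = eLpNorm (g * g) 2 haarAddCircle ^ 2 := by
        rw [eLpNorm_mul_self, ← pow_mul]; norm_num
    _ ≤ eLpNorm (f * (g - k)) 2 haarAddCircle ^ 2 := by
        gcongr
        refine eLpNorm_le_of_norm_fourierCoeff_le (hg2.integrable_mul hg2) (hv2.mul hf) fun n => ?_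
        rw [hfv]
        exact norm_fourierCoeff_mul_self_le_sub hg2 hk2 hneg hk_nonneg n
    _ ≤ (eLpNorm f ∞ haarAddCircle * eLpNorm (g - k) 2 haarAddCircle) ^ 2 := by
        gcongr
        exact eLpNorm_smul_le_eLpNorm_top_mul_eLpNorm 2 hv2.1 f
    _ = eLpNorm f ∞ haarAddCircle ^ 2 * eLpNorm f 2 haarAddCircle ^ 2 := by
        rw [mul_pow, eLpNorm_eq_of_norm_fourierCoeff_eq hv2 hf2 hv]
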